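/- Let A = □(r → ◇(¬r ∧ p ∧ ◇¬p)) and C = (r ∧ ◇□s ∧ ◇□¬s) → ◇(¬r ∧ ◇□s ∧ ◇□¬s), for distinct propositional letters p, r, s. There is no modal formula I all of whose propositional letters are among {r} such that both A → I and I → C are true at every world of every crown frame 𝔠_n under every valuation (Kripke semantics). Consequently, the logic PL₂ of the crown frames does not have the Craig interpolation property. -/
import Mathlib


/-- Modal formulas over countably many propositional letters, built from
`⊥`, `¬`, `∨` and `◇`. -/
inductive Fml : Type
  | bot : Fml
  | var : ℕ → Fml
  | neg : Fml → Fml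
  | or : Fml → Fml → Fml
  | dia : Fml → Fml

/-- Defined connectives: `φ ∧ ψ`, `φ → ψ`, `□φ := ¬◇¬φ`. -/
def Fml.and (φ ψ : Fml) : Fml := .neg (.or (.neg φ) (.neg ψ))
def Fml.imp (φ ψ : Fml) : Fml := .or (.neg φ) ψ
def Fml.box (φ : Fml) : Fml := .neg (.dia (.neg φ))

/-- Kripke semantics: the set of worlds of the frame `(W, R)` at which a formula is true. -/
def kripkeSem {W : Type*} (R : W → W → Prop) (ν : ℕ → Set W) : Fml → Set W
  | .bot => ∅
  | .var p => ν p
  | .neg φ => (kripkeSem R ν φ)ᶜ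
  | .or φ ψ => kripkeSem R ν φ ∪ kripkeSem R ν ψ
  | .dia φ => {w | ∃ v, R w v ∧ v ∈ kripkeSem R ν φ}

/-- The accessibility relation `Q_n` of the crown frame `𝔠_n` on worlds `Fin (2n+1)`,
where world `0` is the root `r` and world `i` (for `1 ≤ i ≤ 2n`) is `sᵢ`:
the smallest reflexive relation such that the root sees every `sᵢ`, every even
`sᵢ` with `i < 2n` sees `s_{i-1}` and `s_{i+1}`, and `s_{2n}` sees `s_{2n-1}` and `s₁`. -/
def crownRel (n : ℕ) (x y : Fin (2 * n + 1)) : Prop :=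
  x = y ∨ x.val = 0 ∨
    (x.val % 2 = 0 ∧ x.val ≠ 0 ∧
      (y.val + 1 = x.val ∨ y.val = x.val + 1 ∨ (x.val = 2 * n ∧ y.val = 1)))

/-- The formula `A = □(r → ◇(¬r ∧ p ∧ ◇¬p))`, with `p,r,s` the letters `0,1,2`. -/
def fmlA : Fml :=
  Fml.box ((Fml.var 1).imp
    (Fml.dia (((Fml.var 1).neg).and ((Fml.var 0).and (Fml.dia ((Fml.var 0).neg))))))

/-- The formula `C = (r ∧ ◇□s ∧ ◇□¬s) → ◇(¬r ∧ ◇□s ∧ ◇□¬s)`, with `p,r,s` the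
letters `0,1,2`. -/
def fmlC : Fml :=
  ((Fml.var 1).and ((Fml.dia (Fml.box (Fml.var 2))).and
      (Fml.dia (Fml.box ((Fml.var 2).neg))))).imp
    (Fml.dia (((Fml.var 1).neg).and ((Fml.dia (Fml.box (Fml.var 2))).and
      (Fml.dia (Fml.box ((Fml.var 2).neg))))))

/-- The propositional letters occurring in a formula. -/
def Fml.vars : Fml → Set ℕ
  | .bot => ∅
  | .var p => {p}
  | .neg φ => φ.vars
  | .or φ ψ => φ.vars ∪ ψ.vars
  | .dia φ => φ.vars

/-! ### Auxiliary material for the proof -/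

instance crownRel.dec (n : ℕ) (x y : Fin (2*n+1)) : Decidable (crownRel n x y) := by
  unfold crownRel; infer_instance

/-- Valuation making `A` true at the root of `𝔠₂`: `r` holds only at the root,
`p` holds exactly at the even worlds `s₂, s₄`. -/
def muA : ℕ → Set (Fin (2*2+1))
  | 0 => {x | x = 2 ∨ x = 4}
  | 1 => {x | x = 0}
  | _ => ∅

/-- Valuation making `C` false at `s₂` of `𝔠₂`: `r` holds only at `s₂`,
`s` holds only at `s₁`. -/
def muC : ℕ → Set (Fin (2*2+1))
  | 1 => {x | x = 2}
  | 2 => {x | x = 1}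
  | _ => ∅

/-- The bisimulation (for the language with only letter `1`) relating the root of
`(𝔠₂, muA)` with `s₂` of `(𝔠₂, muC)`. -/
def Zrel (x y : Fin (2*2+1)) : Prop :=
  (x = 0 ∧ y = 2) ∨ (x ≠ 0 ∧ (y = 1 ∨ y = 3))

lemma crown2_succ_ne_zero : ∀ x v : Fin (2*2+1), x ≠ 0 → crownRel 2 x v → v ≠ 0 := by
  decide

lemma crown2_root : ∀ v, crownRel 2 (0 : Fin (2*2+1)) v := by decide

lemma crown2_one : ∀ v, crownRel 2 (1 : Fin (2*2+1)) v → v = 1 := by decide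

lemma crown2_three : ∀ v, crownRel 2 (3 : Fin (2*2+1)) v → v = 3 := by decide

lemma crown2_two : ∀ v, crownRel 2 (2 : Fin (2*2+1)) v → v = 1 ∨ v = 2 ∨ v = 3 := by
  decide

lemma crown2_refl : ∀ x : Fin (2*2+1), crownRel 2 x x := by decide

lemma crown2_21 : crownRel 2 (2 : Fin (2*2+1)) 1 := by decide
lemma crown2_23 : crownRel 2 (2 : Fin (2*2+1)) 3 := by decide

/-- Formulas in the letter `1` alone cannot distinguish `Zrel`-related worlds. -/
lemma bisim : ∀ φ : Fml, φ.vars ⊆ {1} → ∀ x y : Fin (2*2+1), Zrel x y →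
    (x ∈ kripkeSem (crownRel 2) muA φ ↔ y ∈ kripkeSem (crownRel 2) muC φ) := by
  intro φ
  induction φ with
  | bot => intro _ x y _; simp [kripkeSem]
  | var p =>
      intro hv x y hZ
      have hp : p = 1 := by
        have : p ∈ ({1} : Set ℕ) := hv (by simp [Fml.vars])
        simpa using this
      subst hp
      rcases hZ with ⟨hx, hy⟩ | ⟨hx, hy⟩
      · subst hx; subst hy; simp [kripkeSem, muA, muC]
      · simp only [kripkeSem, muA, muC, if_pos rfl, Set.mem_setOf_eq]
        constructor
        · intro h; exact absurd h hx
        · intro h; rcases hy with hy | hy <;> subst hy <;> exact absurd h (by decide)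
  | neg ψ ih =>
      intro hv x y hZ
      have := ih (by simpa [Fml.vars] using hv) x y hZ
      simp only [kripkeSem, Set.mem_compl_iff]
      exact not_congr this
  | or ψ χ ih1 ih2 =>
      intro hv x y hZ
      have hv1 : ψ.vars ⊆ {1} := fun a ha => hv (Or.inl ha)
      have hv2 : χ.vars ⊆ {1} := fun a ha => hv (Or.inr ha)
      have h1 := ih1 hv1 x y hZ
      have h2 := ih2 hv2 x y hZ
      simp only [kripkeSem, Set.mem_union]
      exact or_congr h1 h2
  | dia ψ ih =>
      intro hv x y hZ
      have ih' := ih (by simpa [Fml.vars] using hv)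
      simp only [kripkeSem, Set.mem_setOf_eq]
      rcases hZ with ⟨hx, hy⟩ | ⟨hx, hy⟩
      · subst hx; subst hy
        constructor
        · rintro ⟨v, -, hvmem⟩
          by_cases hv0 : v = 0
          · subst hv0
            exact ⟨2, crown2_refl 2, (ih' 0 2 (Or.inl ⟨rfl, rfl⟩)).mp hvmem⟩
          · exact ⟨1, crown2_21, (ih' v 1 (Or.inr ⟨hv0, Or.inl rfl⟩)).mp hvmem⟩
        · rintro ⟨v, hR, hvmem⟩
          rcases crown2_two v hR with h1 | h2 | h3
          · subst h1
            exact ⟨1, crown2_root 1, (ih' 1 1 (Or.inr ⟨by decide, Or.inl rfl⟩)).mpr hvmem⟩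
          · subst h2
            exact ⟨0, crown2_refl 0, (ih' 0 2 (Or.inl ⟨rfl, rfl⟩)).mpr hvmem⟩
          · subst h3
            exact ⟨1, crown2_root 1, (ih' 1 3 (Or.inr ⟨by decide, Or.inr rfl⟩)).mpr hvmem⟩
      · constructor
        · rintro ⟨v, hR, hvmem⟩
          have hv0 : v ≠ 0 := crown2_succ_ne_zero x v hx hR
          refine ⟨y, crown2_refl y, ?_⟩
          exact (ih' v y (Or.inr ⟨hv0, hy⟩)).mp hvmem
        · rintro ⟨v, hR, hvmem⟩
          have hvy : v = y := by
            rcases hy with hy | hy <;> subst hy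
            · exact crown2_one v hR
            · exact crown2_three v hR
          subst hvy
          exact ⟨x, crown2_refl x, (ih' x v (Or.inr ⟨hx, hy⟩)).mpr hvmem⟩

lemma Atrue : (0 : Fin (2*2+1)) ∈ kripkeSem (crownRel 2) muA fmlA := by
  simp only [fmlA, Fml.box, Fml.imp, Fml.and, kripkeSem, Set.mem_compl_iff,
    Set.mem_setOf_eq, Set.mem_union, muA, Set.mem_empty_iff_false]
  push_neg
  decide

lemma Cfalse : (2 : Fin (2*2+1)) ∉ kripkeSem (crownRel 2) muC fmlC := by
  simp only [fmlC, Fml.box, Fml.imp, Fml.and, kripkeSem, Set.mem_compl_iff,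
    Set.mem_setOf_eq, Set.mem_union, muC, Set.mem_empty_iff_false]
  push_neg
  decide

/-- Failure of Craig interpolation for `PL₂`: although `A → C` is valid on all crown
frames, there is no formula `I` in the shared letter `r` alone such that both `A → I`
and `I → C` are valid on all crown frames. -/
theorem no_interpolant_for_A_imp_C :
    ¬ ∃ I : Fml, I.vars ⊆ {1} ∧
      (∀ n, 1 ≤ n → ∀ (μ : ℕ → Set (Fin (2 * n + 1))) (w : Fin (2 * n + 1)),
        w ∈ kripkeSem (crownRel n) μ (fmlA.imp I)) ∧
      (∀ n, 1 ≤ n → ∀ (μ : ℕ → Set (Fin (2 * n + 1))) (w : Fin (2 * n + 1)),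
        w ∈ kripkeSem (crownRel n) μ (I.imp fmlC)) := by
  rintro ⟨I, hvars, hAI, hIC⟩
  have h1 : (0 : Fin (2*2+1)) ∈ kripkeSem (crownRel 2) muA I := by
    have h := hAI 2 (by norm_num) muA 0
    simp only [Fml.imp, kripkeSem, Set.mem_union, Set.mem_compl_iff] at h
    rcases h with h | h
    · exact absurd Atrue h
    · exact h
  have h2 : (2 : Fin (2*2+1)) ∈ kripkeSem (crownRel 2) muC I :=
    (bisim I hvars 0 2 (Or.inl ⟨rfl, rfl⟩)).mp h1
  have h3 := hIC 2 (by norm_num) muC 2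
  simp only [Fml.imp, kripkeSem, Set.mem_union, Set.mem_compl_iff] at h3
  rcases h3 with h3 | h3
  · exact h3 h2
  · exact Cfalse h3
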